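/- arXiv:2304.01787 — 2 statements merged into one kernel-verified Lean document; each statement's English description precedes it below -/
import Mathlib

section
/- Let G be a finite abelian group, 1 ≤ k ≤ r, and ℓ ≥ 0. For every instance X ∈ G^r, the probability mass of the hybrid distribution satisfies D^ℓ({X}) = ( 1[c(X) ≤ ℓ] · (|G|/C(r,k)) · c(X) + Pr_{Y∼D1}[c(Y) > ℓ] ) · D0({X}). -/
open Finset

/-- Number of k-SUM solutions of an instance `X ∈ G^r`: the number of `k`-element
subsets `S ⊆ {1,…,r}` with `∑_{i∈S} X i = 0`. -/
def numSol {G : Type} [AddCommGroup G] [DecidableEq G] (k : ℕ) {r : ℕ} (X : Fin r → G) : ℕ :=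
  (((univ : Finset (Fin r)).powersetCard k).filter (fun S => ∑ i ∈ S, X i = 0)).card

/-- Plant a solution at `S`: replace the entry at the smallest index `i` of `S` by
`-∑_{j∈S, j≠i} Y j`. -/
def plant {G : Type} [AddCommGroup G] {r : ℕ} (Y : Fin r → G) (S : Finset (Fin r)) :
    Fin r → G :=
  fun j =>
    if hS : S.Nonempty then
      if j = S.min' hS then -∑ i ∈ S.erase (S.min' hS), Y i else Y j
    else Y j

/-- The probability mass function of the planted distribution `D1` on `G^r`:
draw `Y` uniformly from `G^r` and an independent uniformly random `k`-element
subset `S`, and output `plant Y S`. -/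
noncomputable def D1pmf {G : Type} [AddCommGroup G] [Fintype G] [DecidableEq G] (k : ℕ)
    {r : ℕ} (X : Fin r → G) : ℝ :=
  (((univ : Finset ((Fin r → G) × Finset (Fin r))).filter
      (fun p => p.2.card = k ∧ plant p.1 p.2 = X)).card : ℝ)
    / ((Fintype.card G : ℝ) ^ r * (r.choose k : ℝ))

/-- The probability mass function of the uniform distribution `D0` on `G^r`. -/
noncomputable def D0pmf (G : Type) [Fintype G] (r : ℕ) (_X : Fin r → G) : ℝ :=
  1 / (Fintype.card G : ℝ) ^ r

/-- `Pr_{Y∼D1}[c(Y) > ℓ]`: the probability under the planted distribution that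
the number of solutions exceeds the real threshold `ℓ`. -/
noncomputable def D1probGt (G : Type) [AddCommGroup G] [Fintype G] [DecidableEq G]
    (k r : ℕ) (ℓ : ℝ) : ℝ :=
  ∑ X ∈ (univ : Finset (Fin r → G)).filter (fun X => ℓ < (numSol k X : ℝ)), D1pmf k X

/-- The probability mass function of the hybrid distribution `D^ℓ` on `G^r`:
draw `X` from `D1`; if `c(X) ≤ ℓ` output `X`, otherwise output an independent
uniform sample from `G^r`. -/
noncomputable def Dhybpmf (G : Type) [AddCommGroup G] [Fintype G] [DecidableEq G]
    (k r : ℕ) (ℓ : ℝ) (X : Fin r → G) : ℝ :=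
  (if (numSol k X : ℝ) ≤ ℓ then D1pmf k X else 0) + D1probGt G k r ℓ * D0pmf G r X

/-! For a nonempty `S`, `plant Y S = X` holds exactly when `X` sums to zero on `S` and `Y` agrees
with `X` off `min S`. So every solution `S` of `X` is hit by exactly `|G|` seeds `Y` (the entry
`Y (min S)` is free) and no other `S` is hit at all, whence
`D1({X}) = |G| c(X) / (|G|^r C(r,k)) = (|G| / C(r,k)) c(X) D0({X})`; the formula for `D^ℓ` is
then a rearrangement. -/

theorem filter_eq_off_eq_image_update {ι β : Type*} [Fintype ι] [DecidableEq ι] [Fintype β]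
    [DecidableEq β] (f : ι → β) (i : ι) :
    ({g | ∀ j ≠ i, g j = f j} : Finset (ι → β)) = univ.image (Function.update f i) := by
  ext g
  simp only [mem_filter, mem_univ, true_and, mem_image]
  constructor
  · exact fun agree => ⟨g i, (Function.eq_update_iff.mpr ⟨rfl, agree⟩).symm⟩
  · rintro ⟨b, rfl⟩ j hj
    exact Function.update_of_ne hj b f

theorem card_filter_eq_off_eq_card {ι β : Type*} [Fintype ι] [DecidableEq ι] [Fintype β]
    [DecidableEq β] (f : ι → β) (i : ι) :
    #({g | ∀ j ≠ i, g j = f j} : Finset (ι → β)) = Fintype.card β := by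
  rw [filter_eq_off_eq_image_update, card_image_of_injective _ (Function.update_injective f i),
    card_univ]

section Planting

variable {G : Type} [AddCommGroup G] {r : ℕ}

theorem plant_eq_iff {S : Finset (Fin r)} (hS : S.Nonempty) (Y X : Fin r → G) :
    plant Y S = X ↔ (∑ i ∈ S, X i = 0) ∧ ∀ j ≠ S.min' hS, Y j = X j := by
  set m := S.min' hS
  have sum_eq : ∑ i ∈ S, X i = X m + ∑ i ∈ S.erase m, X i :=
    (add_sum_erase S X (S.min'_mem hS)).symm
  constructor
  · rintro rfl
    have agree : ∀ j ≠ m, plant Y S j = Y j := fun j hj => by simp [plant, hS, m, hj]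
    refine ⟨?_, fun j hj => (agree j hj).symm⟩
    rw [sum_eq, sum_congr rfl fun i hi => agree i (ne_of_mem_erase hi)]
    simp [plant, hS, m]
  · rintro ⟨hsum, agree⟩
    funext j
    by_cases hj : j = m
    · subst hj
      simp only [plant, dif_pos hS]
      rw [if_pos rfl, sum_congr rfl fun i hi => agree i (ne_of_mem_erase hi)]
      exact neg_eq_of_add_eq_zero_left (sum_eq ▸ hsum)
    · simp [plant, hS, m, hj, agree j hj]

variable [Fintype G] [DecidableEq G]

theorem card_filter_plant_eq {S : Finset (Fin r)} (hS : S.Nonempty) (X : Fin r → G) :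
    #{Y | plant Y S = X} = if ∑ i ∈ S, X i = 0 then Fintype.card G else 0 := by
  split_ifs with hsum
  · convert card_filter_eq_off_eq_card X (S.min' hS) using 3 with Y
    simp [plant_eq_iff hS, hsum]
  · rw [card_eq_zero, filter_eq_empty_iff]
    exact fun Y _ h => hsum ((plant_eq_iff hS Y X).mp h).1

theorem card_filter_plant_eq_card_mul_numSol {k : ℕ} (hk : 1 ≤ k) (X : Fin r → G) :
    #{p : (Fin r → G) × Finset (Fin r) | p.2.card = k ∧ plant p.1 p.2 = X}
      = Fintype.card G * numSol k X := by
  calc _ = ∑ S ∈ powersetCard k univ, #{Y | plant Y S = X} := by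
        rw [card_filter, Fintype.sum_prod_type_right, powersetCard_eq_filter, powerset_univ,
          sum_filter]
        refine sum_congr rfl fun S _ => ?_
        by_cases hS : #S = k <;>
          simp only [hS, true_and, false_and, if_true, if_false, card_filter, sum_const_zero]
    _ = ∑ S ∈ powersetCard k univ, if ∑ i ∈ S, X i = 0 then Fintype.card G else 0 :=
        sum_congr rfl fun S hS =>
          card_filter_plant_eq (card_pos.mp ((mem_powersetCard_univ.mp hS).symm ▸ hk)) X
    _ = Fintype.card G * numSol k X := by
        rw [← sum_filter, sum_const, smul_eq_mul, mul_comm, numSol]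

theorem D1pmf_eq_mul_D0pmf {k : ℕ} (hk : 1 ≤ k) (X : Fin r → G) :
    D1pmf k X = (Fintype.card G : ℝ) / r.choose k * numSol k X * D0pmf G r X := by
  rw [D1pmf, D0pmf, card_filter_plant_eq_card_mul_numSol hk X]
  push_cast
  ring

end Planting

theorem Dhybpmf_explicit_general
    (G : Type) [AddCommGroup G] [Fintype G] [DecidableEq G]
    (k r : ℕ) (hk : 1 ≤ k) (ℓ : ℝ) (X : Fin r → G) :
    Dhybpmf G k r ℓ X
      = ((if (numSol k X : ℝ) ≤ ℓ then
            ((Fintype.card G : ℝ) / (r.choose k : ℝ)) * (numSol k X : ℝ)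
          else 0)
          + D1probGt G k r ℓ) * D0pmf G r X := by
  rw [Dhybpmf, D1pmf_eq_mul_D0pmf hk X]
  split_ifs <;> ring

/-- **Explicit pmf of the hybrid distribution `D^ℓ`.**
For every instance `X ∈ G^r` and real `ℓ ≥ 0`,
`D^ℓ({X}) = ( 1[c(X) ≤ ℓ]·(|G|/C(r,k))·c(X) + Pr_{Y∼D1}[c(Y) > ℓ] )·D0({X})`. -/
theorem Dhybpmf_explicit
    (G : Type) [AddCommGroup G] [Fintype G] [DecidableEq G]
    (k r : ℕ) (hk : 1 ≤ k) (hkr : k ≤ r) (ℓ : ℝ) (hℓ : 0 ≤ ℓ) (X : Fin r → G) :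
    Dhybpmf G k r ℓ X
      = ((if (numSol k X : ℝ) ≤ ℓ then
            ((Fintype.card G : ℝ) / (r.choose k : ℝ)) * (numSol k X : ℝ)
          else 0)
          + D1probGt G k r ℓ) * D0pmf G r X :=
  Dhybpmf_explicit_general G k r hk ℓ X
end

section
/- Let G be a finite abelian group, let k, r be integers with 2 ≤ k, 2k ≤ r, and r ≥ 2^k·k², and let Δ ∈ (0,1] be a real number such that |G| ≥ r^{k/Δ}/2 and r^{k(1−1/Δ)} ≤ 1/4. Then the probability that a planted instance has a k-SUM solution other than the planted one satisfies Pr_{X∼D1}[c(X) ≥ 2] < 4·r^{k(1−1/Δ)}. -/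
open Finset

/-!
For a fixed planted set `S` and another `k`-set `T`, the map `Y ↦ ∑_{j ∈ T} (plant Y S) j` is an
additive homomorphism `G^r → G`. It is surjective as soon as `T ⊄ S`: planting leaves the
coordinates outside `S` untouched, so moving one coordinate of `T \ S` moves the sum freely. Hence
each of the `C(r,k) - 1` sets `T ≠ S` is a solution for exactly a `1/|G|` fraction of the `Y`, and a
union bound gives `Pr[c(X) ≥ 2] ≤ (C(r,k) - 1)/|G| < r^k / |G| ≤ 2 r^{k(1-1/Δ)}`.
-/

lemma AddMonoidHom.card_filter_eq_zero_mul_card_of_surjective {A B : Type*} [AddGroup A]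
    [AddGroup B] [Fintype A] [Fintype B] [DecidableEq B] (f : A →+ B)
    (hf : Function.Surjective f) :
    #{a | f a = 0} * Fintype.card B = Fintype.card A := by
  have hker : #{a | f a = 0} = Nat.card f.ker := by
    rw [← Fintype.card_subtype, ← Nat.card_eq_fintype_card]
    exact Nat.card_congr (Equiv.subtypeEquivRight fun a => f.mem_ker.symm)
  rw [hker, ← Nat.card_eq_fintype_card, ← Nat.card_eq_fintype_card, ← f.ker.card_mul_index,
    AddSubgroup.index_ker, f.range_eq_top.mpr hf, AddSubgroup.card_top]

section Plant

variable {G : Type} [AddCommGroup G] {r : ℕ}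

lemma plant_add (Y Y' : Fin r → G) (S : Finset (Fin r)) :
    plant (Y + Y') S = plant Y S + plant Y' S := by
  funext j
  simp only [plant, Pi.add_apply]
  split_ifs <;> simp [sum_add_distrib, add_comm]

lemma plant_single_of_notMem {S : Finset (Fin r)} {j : Fin r} (hj : j ∉ S) (g : G) :
    plant (Pi.single j g) S = Pi.single j g := by
  funext i
  unfold plant
  split_ifs with hS hi
  · subst hi
    have hne : S.min' hS ≠ j := by rintro rfl; exact hj (S.min'_mem hS)
    rw [sum_pi_single', if_neg fun h => hj (mem_of_mem_erase h), Pi.single_eq_of_ne hne, neg_zero]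
  · rfl
  · rfl

def plantSumHom (S T : Finset (Fin r)) : (Fin r → G) →+ G :=
  AddMonoidHom.mk' (fun Y => ∑ j ∈ T, plant Y S j) fun Y Y' => by
    simp [plant_add, sum_add_distrib]

lemma plantSumHom_surjective {S T : Finset (Fin r)} (hT : ¬ T ⊆ S) :
    Function.Surjective (plantSumHom (G := G) S T) := by
  obtain ⟨j, hjT, hjS⟩ := not_subset.mp hT
  intro g
  refine ⟨Pi.single j g, ?_⟩
  simp [plantSumHom, plant_single_of_notMem hjS, hjT]

lemma exists_ne_of_two_le_numSol [DecidableEq G] {k : ℕ} {X : Fin r → G} (h : 2 ≤ numSol k X)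
    (S : Finset (Fin r)) :
    ∃ T ∈ (univ : Finset (Fin r)).powersetCard k, T ≠ S ∧ ∑ i ∈ T, X i = 0 := by
  obtain ⟨T, hT, hTS⟩ := exists_mem_ne (s := {T ∈ powersetCard k univ | ∑ i ∈ T, X i = 0})
    h S
  exact ⟨T, (mem_filter.mp hT).1, hTS, (mem_filter.mp hT).2⟩

end Plant

section Counting

variable {G : Type} [AddCommGroup G] [Fintype G] [DecidableEq G] {r : ℕ}

lemma card_filter_sum_plant_eq_zero_mul_card {S T : Finset (Fin r)} (hT : ¬ T ⊆ S) :
    #{Y : Fin r → G | ∑ j ∈ T, plant Y S j = 0} * Fintype.card G = Fintype.card G ^ r := by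
  simpa [plantSumHom] using
    (plantSumHom (G := G) S T).card_filter_eq_zero_mul_card_of_surjective
      (plantSumHom_surjective hT)

lemma card_filter_two_le_numSol_plant_mul_card_le {k : ℕ} {S : Finset (Fin r)} (hS : #S = k) :
    #{Y : Fin r → G | 2 ≤ numSol k (plant Y S)} * Fintype.card G
      ≤ (r.choose k - 1) * Fintype.card G ^ r := by
  set N := Fintype.card G
  have hcover : ({Y : Fin r → G | 2 ≤ numSol k (plant Y S)} : Finset _) ⊆
      ((powersetCard k univ).erase S).biUnion
        fun T => {Y : Fin r → G | ∑ j ∈ T, plant Y S j = 0} := by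
    intro Y hY
    obtain ⟨T, hT, hTS, hsum⟩ := exists_ne_of_two_le_numSol (mem_filter.mp hY).2 S
    exact mem_biUnion.mpr ⟨T, mem_erase.mpr ⟨hTS, hT⟩, mem_filter.mpr ⟨mem_univ _, hsum⟩⟩
  calc #{Y : Fin r → G | 2 ≤ numSol k (plant Y S)} * N
      ≤ (∑ T ∈ (powersetCard k univ).erase S,
          #{Y : Fin r → G | ∑ j ∈ T, plant Y S j = 0}) * N := by
        gcongr
        exact (card_le_card hcover).trans card_biUnion_le
    _ = ∑ T ∈ (powersetCard k univ).erase S, N ^ r := by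
        rw [sum_mul]
        refine sum_congr rfl fun T hT => card_filter_sum_plant_eq_zero_mul_card fun hTS => ?_
        obtain ⟨hTS', hTk⟩ := mem_erase.mp hT
        exact hTS' (eq_of_subset_of_card_le hTS (by rw [hS, mem_powersetCard_univ.mp hTk]))
    _ = (r.choose k - 1) * N ^ r := by
        rw [sum_const, smul_eq_mul, card_erase_of_mem (mem_powersetCard_univ.mpr hS),
          card_powersetCard, card_univ, Fintype.card_fin]

lemma sum_card_fiber_plant_eq_sum_card_plant_mem (k : ℕ) (A : Finset (Fin r → G)) :
    ∑ X ∈ A, #{p : (Fin r → G) × Finset (Fin r) | #p.2 = k ∧ plant p.1 p.2 = X}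
      = ∑ S ∈ powersetCard k univ, #{Y : Fin r → G | plant Y S ∈ A} := by
  simp_rw [← filter_filter, sum_card_fiberwise_eq_card_filter]
  rw [← univ_filter_card_eq, sum_filter, filter_filter, card_filter, Fintype.sum_prod_type_right]
  refine sum_congr rfl fun S _ => ?_
  rw [card_filter]
  split_ifs <;> simp [*]

lemma sum_D1pmf_le_of_forall_card_plant_mem_le {k : ℕ} (hkr : k ≤ r) (A : Finset (Fin r → G))
    {ε : ℝ} (h : ∀ S : Finset (Fin r), #S = k →
      (#{Y : Fin r → G | plant Y S ∈ A} : ℝ) ≤ ε * Fintype.card G ^ r) :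
    ∑ X ∈ A, D1pmf k X ≤ ε := by
  have hm : (0 : ℝ) < r.choose k := by exact_mod_cast Nat.choose_pos hkr
  have hN : (0 : ℝ) < Fintype.card G := by exact_mod_cast Fintype.card_pos
  unfold D1pmf
  rw [← sum_div, div_le_iff₀ (by positivity)]
  calc ∑ X ∈ A, (#{p : (Fin r → G) × Finset (Fin r) | #p.2 = k ∧ plant p.1 p.2 = X} : ℝ)
      = ∑ S ∈ powersetCard k univ, (#{Y : Fin r → G | plant Y S ∈ A} : ℝ) := by
        exact_mod_cast sum_card_fiber_plant_eq_sum_card_plant_mem k A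
    _ ≤ ∑ S ∈ powersetCard k (univ : Finset (Fin r)), ε * Fintype.card G ^ r :=
        sum_le_sum fun S hS => h S (mem_powersetCard_univ.mp hS)
    _ = ε * ((Fintype.card G : ℝ) ^ r * r.choose k) := by
        rw [sum_const, card_powersetCard, card_univ, Fintype.card_fin, nsmul_eq_mul]
        ring

lemma sum_D1pmf_two_le_numSol_le {k : ℕ} (hkr : k ≤ r) :
    ∑ X ∈ (univ : Finset (Fin r → G)).filter (fun X => 2 ≤ numSol k X), D1pmf k X
      ≤ ((r.choose k - 1 : ℕ) : ℝ) / Fintype.card G := by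
  have hN : (0 : ℝ) < Fintype.card G := by exact_mod_cast Fintype.card_pos
  refine sum_D1pmf_le_of_forall_card_plant_mem_le hkr _ fun S hS => ?_
  have hbad : (#{Y : Fin r → G | 2 ≤ numSol k (plant Y S)} : ℝ) * Fintype.card G
      ≤ ((r.choose k - 1 : ℕ) : ℝ) * Fintype.card G ^ r := by
    exact_mod_cast card_filter_two_le_numSol_plant_mul_card_le hS
  rw [div_mul_eq_mul_div, le_div_iff₀ hN]
  simpa only [mem_filter, mem_univ, true_and] using hbad

end Counting

theorem planted_extra_solutions_rare_general
    (G : Type) [AddCommGroup G] [Fintype G] [DecidableEq G]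
    (k r : ℕ) (hk : 2 ≤ k) (hkr : 2 * k ≤ r)
    (Δ : ℝ)
    (hG : (r : ℝ) ^ ((k : ℝ) / Δ) / 2 ≤ (Fintype.card G : ℝ)) :
    ∑ X ∈ (univ : Finset (Fin r → G)).filter (fun X => 2 ≤ numSol k X), D1pmf k X
      < 4 * (r : ℝ) ^ ((k : ℝ) * (1 - 1 / Δ)) := by
  have hr : (0 : ℝ) < r := by exact_mod_cast (by omega : 0 < r)
  have hchoose : ((r.choose k - 1 : ℕ) : ℝ) ≤ r ^ (k : ℝ) := by
    rw [Real.rpow_natCast]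
    exact_mod_cast (Nat.sub_le _ 1).trans (Nat.choose_le_pow r k)
  have hsplit : (r : ℝ) ^ (k : ℝ) = r ^ ((k : ℝ) / Δ) * r ^ ((k : ℝ) * (1 - 1 / Δ)) := by
    rw [← Real.rpow_add hr]
    ring_nf
  have hpos := Real.rpow_pos_of_pos hr ((k : ℝ) * (1 - 1 / Δ))
  calc _ ≤ ((r.choose k - 1 : ℕ) : ℝ) / Fintype.card G := sum_D1pmf_two_le_numSol_le (by omega)
    _ ≤ r ^ (k : ℝ) / (r ^ ((k : ℝ) / Δ) / 2) := by gcongr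
    _ = 2 * r ^ ((k : ℝ) * (1 - 1 / Δ)) := by
        rw [hsplit]
        field_simp
    _ < 4 * r ^ ((k : ℝ) * (1 - 1 / Δ)) := by linarith

/-- **Planted instances rarely have extraneous solutions.**
If `2 ≤ k`, `2k ≤ r`, `r ≥ 2^k·k²`, `Δ ∈ (0,1]`, `|G| ≥ r^{k/Δ}/2`, and
`r^{k(1−1/Δ)} ≤ 1/4`, then `Pr_{X∼D1}[c(X) ≥ 2] < 4·r^{k(1−1/Δ)}`. -/
theorem planted_extra_solutions_rare
    (G : Type) [AddCommGroup G] [Fintype G] [DecidableEq G]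
    (k r : ℕ) (hk : 2 ≤ k) (hkr : 2 * k ≤ r) (hr : 2 ^ k * k ^ 2 ≤ r)
    (Δ : ℝ) (hΔ0 : 0 < Δ) (hΔ1 : Δ ≤ 1)
    (hG : (r : ℝ) ^ ((k : ℝ) / Δ) / 2 ≤ (Fintype.card G : ℝ))
    (hsmall : (r : ℝ) ^ ((k : ℝ) * (1 - 1 / Δ)) ≤ 1 / 4) :
    ∑ X ∈ (univ : Finset (Fin r → G)).filter (fun X => 2 ≤ numSol k X), D1pmf k X
      < 4 * (r : ℝ) ^ ((k : ℝ) * (1 - 1 / Δ)) :=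
  planted_extra_solutions_rare_general G k r hk hkr Δ hG
end
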